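/- Deterministic entropy condensers yield very strong extractors: let ε ∈ [0,1], D | m, and h : {0,1}^n → {0,1}^m with H(h(X)) ≥ (1−ε)m for X ∼ μ, for every μ in a family F. Define g(x,s) as the s-th block of m/D bits of h(x). Then g is a very strong δ-extractor for F with δ = sqrt((ln 2)/2 · ε · m/D), provided (ln 2)/2 · ε ≤ D/m. -/

import Mathlib

open Finset

/-- `μ` is a probability distribution on the finite type `A`. -/
def IsDist {A : Type*} [Fintype A] (μ : A → ℝ) : Prop :=
  (∀ a, 0 ≤ μ a) ∧ ∑ a, μ a = 1

open Classical in
/-- Probability of an event under a distribution on a finite type. -/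
noncomputable def Pr {A : Type*} [Fintype A] (μ : A → ℝ) (p : A → Prop) : ℝ :=
  ∑ a, if p a then μ a else 0

/-- Base-2 Shannon entropy of the push-forward of `μ` under `f`. -/
noncomputable def pushH {Ω β : Type*} [Fintype Ω] [Fintype β]
    (μ : Ω → ℝ) (f : Ω → β) : ℝ :=
  ∑ b, Pr μ (fun x => f x = b) * Real.logb 2 (Pr μ (fun x => f x = b))⁻¹

/-- The "very strong extractor" error of `g : Ω × [D] → {0,1}^r` on `μ`:
`E_{T uniform, Z∼μ} ‖ν^μ_{T, g(Z,1),…,g(Z,T−1)} − U‖₁`, where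
`ν^μ_{s,y₁,…,y_{s−1}}` is the conditional distribution of `g(X,s)` given
`g(X,t) = y_t` for all `t < s`. -/
noncomputable def vsErr {Ω : Type*} [Fintype Ω] {D r : ℕ}
    (μ : Ω → ℝ) (g : Ω → Fin D → (Fin r → Bool)) : ℝ :=
  (D : ℝ)⁻¹ * ∑ s : Fin D, ∑ z, μ z *
    ∑ y : Fin r → Bool,
      |Pr μ (fun x => g x s = y ∧ ∀ t, t < s → g x t = g z t)
          / Pr μ (fun x => ∀ t, t < s → g x t = g z t)
        - ((2 : ℝ) ^ r)⁻¹|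

/-!
Write `ν_{s,z}` for the law of block `s` given that the earlier blocks agree with those of `z`.
Its Kullback–Leibler divergence from uniform, averaged over `z ∼ μ` and summed over `s`,
telescopes through the prefix probabilities (chain rule) to `(m − H(h(X))) ln 2 ≤ ε m ln 2`.
Pinsker's inequality bounds each `‖ν_{s,z} − U‖₁` by `√(2 KL)`, and Cauchy–Schwarz moves the
average over `(s, z)` inside the square root. Pinsker itself follows from the pointwise bound
`3 (x − 1)² ≤ (2x + 4) klFun x` by Cauchy–Schwarz with weights `(2p + 4q)/3`, which sum to `2`.
-/

open Real InformationTheory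

lemma nonneg_of_hasDerivAt_of_sub_one_mul_nonneg {f f' : ℝ → ℝ}
    (hf : ∀ x, 0 < x → HasDerivAt f (f' x) x) (hf' : ∀ x, 0 < x → 0 ≤ (x - 1) * f' x)
    (h1 : f 1 = 0) {x : ℝ} (hx : 0 < x) : 0 ≤ f x := by
  have hcont : ∀ s ⊆ Set.Ioi 0, ContinuousOn f s :=
    fun s hs y hy => (hf y (hs hy)).continuousAt.continuousWithinAt
  rcases le_total 1 x with hx1 | hx1
  · have hmono : MonotoneOn f (Set.Ici 1) := by
      refine monotoneOn_of_hasDerivWithinAt_nonneg (f' := f') (convex_Ici 1)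
        (hcont _ fun y hy => Set.mem_Ioi.2 (one_pos.trans_le hy)) (fun y hy => ?_) fun y hy => ?_
      all_goals rw [interior_Ici] at hy
      · exact (hf y (one_pos.trans hy)).hasDerivWithinAt
      · exact nonneg_of_mul_nonneg_right (hf' y (one_pos.trans hy)) (sub_pos.2 hy)
    simpa [h1] using hmono (Set.mem_Ici.2 le_rfl) hx1 hx1
  · have hanti : AntitoneOn f (Set.Icc x 1) := by
      refine antitoneOn_of_hasDerivWithinAt_nonpos (f' := f') (convex_Icc x 1)
        (hcont _ fun y hy => Set.mem_Ioi.2 (hx.trans_le hy.1)) (fun y hy => ?_) fun y hy => ?_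
      all_goals rw [interior_Icc] at hy
      · exact (hf y (hx.trans hy.1)).hasDerivWithinAt
      · exact nonpos_of_mul_nonneg_right (hf' y (hx.trans hy.1)) (sub_neg.2 hy.2)
    simpa [h1] using hanti (Set.left_mem_Icc.2 hx1) (Set.right_mem_Icc.2 hx1) hx1

lemma sub_one_mul_add_one_mul_log_sub_nonneg {x : ℝ} (hx : 0 < x) :
    0 ≤ (x - 1) * ((x + 1) * log x - 2 * (x - 1)) := by
  set ψ : ℝ → ℝ := fun x => (x + 1) * log x - 2 * (x - 1)
  have hderiv : ∀ y, 0 < y → HasDerivAt ψ (log y + y⁻¹ - 1) y := fun y hy => by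
    refine ((((hasDerivAt_id' y).add_const 1).mul (hasDerivAt_log hy.ne')).sub
      (((hasDerivAt_id' y).sub_const 1).const_mul 2)).congr_deriv ?_
    field_simp
    ring
  have hmono : MonotoneOn ψ (Set.Ioi 0) := by
    refine monotoneOn_of_hasDerivWithinAt_nonneg (f' := fun y => log y + y⁻¹ - 1) (convex_Ioi 0)
      (fun y hy => (hderiv y hy).continuousAt.continuousWithinAt) (fun y hy => ?_) fun y hy => ?_
    all_goals rw [interior_Ioi] at hy
    · exact (hderiv y hy).hasDerivWithinAt
    · linarith [one_sub_inv_le_log_of_pos hy]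
  have hψ1 : ψ 1 = 0 := by simp [ψ]
  rcases le_total 1 x with hx1 | hx1
  · exact mul_nonneg (sub_nonneg.2 hx1) (hψ1 ▸ hmono (Set.mem_Ioi.2 one_pos) hx hx1)
  · exact mul_nonneg_of_nonpos_of_nonpos (sub_nonpos.2 hx1)
      (hψ1 ▸ hmono hx (Set.mem_Ioi.2 one_pos) hx1)

lemma three_mul_sub_one_sq_le_mul_klFun {x : ℝ} (hx : 0 ≤ x) :
    3 * (x - 1) ^ 2 ≤ (2 * x + 4) * klFun x := by
  rcases hx.eq_or_lt with rfl | hx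
  · norm_num [klFun_zero]
  have key := nonneg_of_hasDerivAt_of_sub_one_mul_nonneg
    (f := fun x => (2 * x + 4) * klFun x - 3 * (x - 1) ^ 2)
    (f' := fun x => 4 * ((x + 1) * log x - 2 * (x - 1)))
    (fun y hy => by
      refine ((((hasDerivAt_id' y).const_mul 2).add_const 4).mul (hasDerivAt_klFun hy.ne')).sub
        ((((hasDerivAt_id' y).sub_const 1).pow 2).const_mul 3) |>.congr_deriv ?_
      simp only [klFun_apply]
      ring)
    (fun y hy => by nlinarith [sub_one_mul_add_one_mul_log_sub_nonneg hy])
    (by simp [klFun_one]) hx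
  linarith [key]

section Pinsker

variable {β : Type*} [Fintype β] {p q : β → ℝ}

noncomputable def finKL (p q : β → ℝ) : ℝ := ∑ y, p y * log (p y / q y)

lemma sum_mul_klFun_div_eq_finKL (hp : ∑ y, p y = 1) (hq : ∑ y, q y = 1) (hq0 : ∀ y, q y ≠ 0) :
    ∑ y, q y * klFun (p y / q y) = finKL p q := by
  have hterm : ∀ y, q y * klFun (p y / q y) = p y * log (p y / q y) + (q y - p y) := fun y => by
    rw [klFun_apply]
    field_simp [hq0 y]
    ring
  rw [sum_congr rfl fun y _ => hterm y, sum_add_distrib, sum_sub_distrib, hp, hq, sub_self,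
    add_zero, finKL]

lemma finKL_nonneg (hp : IsDist p) (hq : ∑ y, q y = 1) (hq0 : ∀ y, 0 < q y) :
    0 ≤ finKL p q := by
  rw [← sum_mul_klFun_div_eq_finKL hp.2 hq fun y => (hq0 y).ne']
  exact sum_nonneg fun y _ =>
    mul_nonneg (hq0 y).le (klFun_nonneg (div_nonneg (hp.1 y) (hq0 y).le))

theorem sum_abs_sub_le_sqrt_two_mul_finKL (hp : IsDist p) (hq : ∑ y, q y = 1)
    (hq0 : ∀ y, 0 < q y) :
    ∑ y, |p y - q y| ≤ √(2 * finKL p q) := by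
  rw [← sum_mul_klFun_div_eq_finKL hp.2 hq fun y => (hq0 y).ne']
  refine le_sqrt_of_sq_le ?_
  have hweights : ∑ y, (2 * p y + 4 * q y) / 3 = 2 := by
    rw [← sum_div, sum_add_distrib, ← mul_sum, ← mul_sum, hp.2, hq]
    norm_num
  rw [← hweights]
  have hx : ∀ y, 0 ≤ p y / q y := fun y => div_nonneg (hp.1 y) (hq0 y).le
  refine sum_sq_le_sum_mul_sum_of_sq_le_mul _ (fun y _ => by linarith [hp.1 y, hq0 y])
    (fun y _ => mul_nonneg (hq0 y).le (klFun_nonneg (hx y))) fun y _ => ?_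
  have hqy := (hq0 y).ne'
  calc |p y - q y| ^ 2 = q y ^ 2 / 3 * (3 * (p y / q y - 1) ^ 2) := by
        rw [sq_abs]; field_simp
    _ ≤ q y ^ 2 / 3 * ((2 * (p y / q y) + 4) * klFun (p y / q y)) :=
        mul_le_mul_of_nonneg_left (three_mul_sub_one_sq_le_mul_klFun (hx y)) (by positivity)
    _ = (2 * p y + 4 * q y) / 3 * (q y * klFun (p y / q y)) := by
        field_simp

end Pinsker

section Pr

variable {A β : Type*} [Fintype A] {μ : A → ℝ}

lemma Pr_congr {p q : A → Prop} (h : ∀ a, p a ↔ q a) : Pr μ p = Pr μ q := by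
  rw [funext fun a => propext (h a)]

lemma Pr_nonneg (hμ : ∀ a, 0 ≤ μ a) (p : A → Prop) : 0 ≤ Pr μ p :=
  sum_nonneg fun a _ => by split <;> simp [hμ a]

lemma le_Pr_of_mem (hμ : ∀ a, 0 ≤ μ a) {p : A → Prop} {z : A} (hz : p z) : μ z ≤ Pr μ p := by
  classical
  simpa [Pr, hz] using single_le_sum (f := fun a => if p a then μ a else 0)
    (fun a _ => by split <;> simp [hμ a]) (mem_univ z)

lemma Pr_true (hμ : IsDist μ) : Pr μ (fun _ => True) = 1 := by
  simpa [Pr] using hμ.2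

open Classical in
lemma sum_Pr_eq_and_mul [Fintype β] (f : A → β) (p : A → Prop) (c : β → ℝ) :
    ∑ y, Pr μ (fun x => f x = y ∧ p x) * c y = ∑ x, if p x then μ x * c (f x) else 0 := by
  simp only [Pr, sum_mul]
  rw [sum_comm]
  refine sum_congr rfl fun x _ => ?_
  by_cases hx : p x <;> simp [hx]

lemma sum_Pr_eq_and [Fintype β] (f : A → β) (p : A → Prop) :
    ∑ y, Pr μ (fun x => f x = y ∧ p x) = Pr μ p := by
  simpa [Pr] using sum_Pr_eq_and_mul (μ := μ) f p fun _ => 1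

lemma sum_Pr_eq_mul [Fintype β] (f : A → β) (c : β → ℝ) :
    ∑ y, Pr μ (fun x => f x = y) * c y = ∑ x, μ x * c (f x) := by
  simpa using sum_Pr_eq_and_mul (μ := μ) f (fun _ => True) c

lemma sum_mul_sum_Pr_and_div_Pr_mul [Fintype β] (hμ : ∀ a, 0 ≤ μ a) {R : A → A → Prop}
    (hR : Equivalence R) (f : A → β) (c : A → β → ℝ) (hc : ∀ z z', R z z' → c z = c z') :
    ∑ z, μ z * ∑ y, Pr μ (fun x => f x = y ∧ R x z) / Pr μ (fun x => R x z) * c z y =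
      ∑ z, μ z * c z (f z) := by
  classical
  set Q : A → ℝ := fun z => Pr μ (fun x => R x z)
  have hQ : ∀ x z, R x z → Q x = Q z := fun x z hxz =>
    Pr_congr fun a => ⟨fun h => hR.trans h hxz, fun h => hR.trans h (hR.symm hxz)⟩
  have hinner : ∀ z, μ z * ∑ y, Pr μ (fun x => f x = y ∧ R x z) / Q z * c z y =
      ∑ x, if R x z then μ z / Q z * (μ x * c x (f x)) else 0 := fun z => by
    calc _ = μ z / Q z * ∑ y, Pr μ (fun x => f x = y ∧ R x z) * c z y := by
          rw [mul_sum, mul_sum]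
          exact sum_congr rfl fun y _ => by ring
      _ = _ := by
          rw [sum_Pr_eq_and_mul, mul_sum]
          refine sum_congr rfl fun x _ => ?_
          split_ifs with hxz
          · rw [hc x z hxz]
          · rw [mul_zero]
  rw [sum_congr rfl fun z _ => hinner z, sum_comm]
  refine sum_congr rfl fun x _ => ?_
  -- Every `z` in the class of `x` has `Q z = Q x`, and these `μ z` add up to `Q x`.
  have hfiber : ∑ z, (if R x z then μ z / Q z * (μ x * c x (f x)) else 0) =
      μ x * c x (f x) / Q x * Q x := by
    calc _ = ∑ z, μ x * c x (f x) / Q x * (if R z x then μ z else 0) :=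
          sum_congr rfl fun z _ => by
            by_cases hxz : R x z
            · rw [if_pos hxz, if_pos (hR.symm hxz), hQ x z hxz]; ring
            · rw [if_neg hxz, if_neg fun h => hxz (hR.symm h), mul_zero]
      _ = _ := by rw [← mul_sum]; rfl
  rw [hfiber]
  -- `μ x ≤ Q x`, so a null class contributes nothing.
  rcases eq_or_ne (Q x) 0 with hQx | hQx
  · have hμx : μ x = 0 := le_antisymm (hQx ▸ le_Pr_of_mem hμ (hR.refl x)) (hμ x)
    simp [hμx]
  · rw [div_mul_cancel₀ _ hQx]

end Pr

section ChainRule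

lemma equivalence_prefix {Ω β : Type*} {D : ℕ} (g : Ω → Fin D → β) (s : Fin D) :
    Equivalence fun x z : Ω => ∀ t, t < s → g x t = g z t :=
  ⟨fun _ _ _ => rfl, fun h t ht => (h t ht).symm, fun h h' t ht => (h t ht).trans (h' t ht)⟩

variable {Ω β : Type*} [Fintype Ω] {D : ℕ} (μ : Ω → ℝ) (g : Ω → Fin D → β)

/-- The conditional law `ν^μ_{s, g(z,1), …, g(z,s-1)}` of block `s`. -/
noncomputable def condDist (s : Fin D) (z : Ω) (y : β) : ℝ :=
  Pr μ (fun x => g x s = y ∧ ∀ t, t < s → g x t = g z t) /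
    Pr μ (fun x => ∀ t, t < s → g x t = g z t)

noncomputable def prefixProb (k : ℕ) (z : Ω) : ℝ :=
  Pr μ (fun x => ∀ t : Fin D, (t : ℕ) < k → g x t = g z t)

lemma prefixProb_zero (hμ : IsDist μ) (z : Ω) : prefixProb μ g 0 z = 1 := by
  rw [prefixProb, Pr_congr (q := fun _ => True) fun x => by simp, Pr_true hμ]

lemma prefixProb_top (z : Ω) : prefixProb μ g D z = Pr μ (fun x => g x = g z) :=
  Pr_congr fun _ => ⟨fun h => funext fun t => h t t.isLt, fun h t _ => congrFun h t⟩

lemma condDist_self (s : Fin D) (z : Ω) :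
    condDist μ g s z (g z s) = prefixProb μ g (s + 1) z / prefixProb μ g s z := by
  refine congrArg₂ _ (Pr_congr fun x => ?_) rfl
  refine ⟨fun ⟨hs, ht⟩ t hts => ?_, fun h => ⟨h s s.val.lt_succ_self,
    fun t ht => h t (Nat.lt_succ_of_lt ht)⟩⟩
  rcases Nat.lt_succ_iff_lt_or_eq.1 hts with hts | hts
  · exact ht t hts
  · rwa [Fin.ext hts]

lemma condDist_congr {s : Fin D} {z z' : Ω} (h : ∀ t, t < s → g z t = g z' t) :
    condDist μ g s z = condDist μ g s z' := by
  have hR := equivalence_prefix g s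
  have hiff : ∀ x, (∀ t, t < s → g x t = g z t) ↔ ∀ t, t < s → g x t = g z' t :=
    fun x => ⟨fun hx => hR.trans hx h, fun hx => hR.trans hx (hR.symm h)⟩
  funext y
  exact congrArg₂ (· / ·) (Pr_congr fun x => and_congr_right' (hiff x)) (Pr_congr hiff)

variable [Fintype β]

lemma pushH_eq_sum (f : Ω → β) :
    pushH μ f = ∑ z, μ z * logb 2 (Pr μ (fun x => f x = f z))⁻¹ :=
  sum_Pr_eq_mul f fun b => logb 2 (Pr μ (fun x => f x = b))⁻¹

lemma log_two_mul_pushH (f : Ω → β) :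
    log 2 * pushH μ f = -∑ z, μ z * log (Pr μ (fun x => f x = f z)) := by
  rw [pushH_eq_sum, mul_sum, ← sum_neg_distrib]
  refine sum_congr rfl fun z _ => ?_
  rw [logb, log_inv]
  field_simp [(log_pos one_lt_two).ne']

lemma condDist_isDist (hμ : IsDist μ) (s : Fin D) {z : Ω} (hz : μ z ≠ 0) :
    IsDist (condDist μ g s z) := by
  have hQ : 0 < Pr μ (fun x => ∀ t, t < s → g x t = g z t) :=
    (lt_of_le_of_ne (hμ.1 z) hz.symm).trans_le (le_Pr_of_mem hμ.1 fun _ _ => rfl)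
  refine ⟨fun y => div_nonneg (Pr_nonneg hμ.1 _) hQ.le, ?_⟩
  simp only [condDist]
  rw [← sum_div, sum_Pr_eq_and, div_self hQ.ne']

lemma sum_log_condDist_self (hμ : IsDist μ) {z : Ω} (hz : 0 < μ z) :
    ∑ s, log (condDist μ g s z (g z s) / (Fintype.card β : ℝ)⁻¹) =
      D * log (Fintype.card β) + log (Pr μ (fun x => g x = g z)) := by
  have hpos : ∀ k, 0 < prefixProb μ g k z := fun _ =>
    hz.trans_le (le_Pr_of_mem hμ.1 fun _ _ => rfl)
  have hterm : ∀ s : Fin D, log (condDist μ g s z (g z s) / (Fintype.card β : ℝ)⁻¹) =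
      log (Fintype.card β) + (log (prefixProb μ g (s + 1) z) - log (prefixProb μ g s z)) := by
    intro s
    have hcard : (0 : ℝ) < Fintype.card β := Nat.cast_pos.2 (Fintype.card_pos_iff.2 ⟨g z s⟩)
    rw [condDist_self, div_inv_eq_mul, log_mul (div_pos (hpos _) (hpos _)).ne' hcard.ne',
      log_div (hpos _).ne' (hpos _).ne']
    ring
  rw [sum_congr rfl fun s _ => hterm s, sum_add_distrib, sum_const, card_univ, Fintype.card_fin,
    nsmul_eq_mul, Fin.sum_univ_eq_sum_range
      (fun k => log (prefixProb μ g (k + 1) z) - log (prefixProb μ g k z)),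
    sum_range_sub (fun k => log (prefixProb μ g k z)), prefixProb_zero μ g hμ, prefixProb_top,
    log_one, sub_zero]

theorem sum_sum_mul_finKL_condDist (hμ : IsDist μ) :
    ∑ s, ∑ z, μ z * finKL (condDist μ g s z) (fun _ => (Fintype.card β : ℝ)⁻¹) =
      D * log (Fintype.card β) - log 2 * pushH μ g := by
  have htower : ∀ s, ∑ z, μ z * finKL (condDist μ g s z) (fun _ => (Fintype.card β : ℝ)⁻¹) =
      ∑ z, μ z * log (condDist μ g s z (g z s) / (Fintype.card β : ℝ)⁻¹) := fun s =>
    sum_mul_sum_Pr_and_div_Pr_mul hμ.1 (equivalence_prefix g s) (g · s)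
      (fun z y => log (condDist μ g s z y / (Fintype.card β : ℝ)⁻¹))
      fun z z' h => by rw [condDist_congr μ g h]
  have hfiber : ∀ z, ∑ s, μ z * log (condDist μ g s z (g z s) / (Fintype.card β : ℝ)⁻¹) =
      μ z * (D * log (Fintype.card β) + log (Pr μ (fun x => g x = g z))) := by
    intro z
    rw [← mul_sum]
    rcases (hμ.1 z).eq_or_lt with hz | hz
    · simp [← hz]
    · rw [sum_log_condDist_self μ g hμ hz]
  rw [sum_congr rfl fun s _ => htower s, sum_comm, sum_congr rfl fun z _ => hfiber z,
    log_two_mul_pushH]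
  simp only [mul_add, sum_add_distrib, ← sum_mul, hμ.2]
  ring

lemma mul_finKL_condDist_nonneg (hμ : IsDist μ) (s : Fin D) (z : Ω) :
    0 ≤ μ z * finKL (condDist μ g s z) fun _ => (Fintype.card β : ℝ)⁻¹ := by
  rcases eq_or_ne (μ z) 0 with hz | hz
  · simp [hz]
  have : Nonempty β := ⟨g z s⟩
  exact mul_nonneg (hμ.1 z)
    (finKL_nonneg (condDist_isDist μ g hμ s hz) (by simp) fun _ => by positivity)

lemma mul_sum_abs_condDist_sub_le (hμ : IsDist μ) (s : Fin D) (z : Ω) :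
    μ z * ∑ y, |condDist μ g s z y - (Fintype.card β : ℝ)⁻¹| ≤
      μ z * √(2 * finKL (condDist μ g s z) fun _ => (Fintype.card β : ℝ)⁻¹) := by
  rcases eq_or_ne (μ z) 0 with hz | hz
  · simp [hz]
  have : Nonempty β := ⟨g z s⟩
  exact mul_le_mul_of_nonneg_left (sum_abs_sub_le_sqrt_two_mul_finKL
    (condDist_isDist μ g hμ s hz) (by simp) fun _ => by positivity) (hμ.1 z)

end ChainRule

theorem vsErr_le_sqrt {Ω : Type*} [Fintype Ω] {D r : ℕ} {μ : Ω → ℝ} (hμ : IsDist μ)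
    (g : Ω → Fin D → Fin r → Bool) :
    vsErr μ g ≤ √(2 * log 2 * (D * r - pushH μ g) / D) := by
  have hu : ((2 : ℝ) ^ r)⁻¹ = (Fintype.card (Fin r → Bool) : ℝ)⁻¹ := by simp
  set K : Fin D → Ω → ℝ := fun s z =>
    finKL (condDist μ g s z) fun _ => (Fintype.card (Fin r → Bool) : ℝ)⁻¹
  have hmass : ∑ p : Fin D × Ω, μ p.2 = D := by simp [Fintype.sum_prod_type, hμ.2]
  have hchain : ∑ p : Fin D × Ω, μ p.2 * (2 * K p.1 p.2) = 2 * log 2 * (D * r - pushH μ g) := by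
    simp_rw [Fintype.sum_prod_type, mul_left_comm _ (2 : ℝ), ← mul_sum]
    rw [sum_sum_mul_finKL_condDist μ g hμ, Fintype.card_fun, Fintype.card_bool, Fintype.card_fin,
      Nat.cast_pow, log_pow]
    push_cast
    ring
  calc vsErr μ g = (D : ℝ)⁻¹ * ∑ p : Fin D × Ω, μ p.2 *
        ∑ y, |condDist μ g p.1 p.2 y - (Fintype.card (Fin r → Bool) : ℝ)⁻¹| := by
        rw [Fintype.sum_prod_type, ← hu]; rfl
    _ ≤ (D : ℝ)⁻¹ * ∑ p : Fin D × Ω, μ p.2 * √(2 * K p.1 p.2) :=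
        mul_le_mul_of_nonneg_left
          (sum_le_sum fun p _ => mul_sum_abs_condDist_sub_le μ g hμ p.1 p.2) (by positivity)
    _ = (D : ℝ)⁻¹ * ∑ p : Fin D × Ω, √(μ p.2) * √(μ p.2 * (2 * K p.1 p.2)) := by
        simp_rw [sqrt_mul (hμ.1 _), ← mul_assoc, mul_self_sqrt (hμ.1 _)]
    _ ≤ (D : ℝ)⁻¹ * (√(∑ p : Fin D × Ω, μ p.2) * √(∑ p : Fin D × Ω, μ p.2 * (2 * K p.1 p.2))) := by
        gcongr
        exact sum_sqrt_mul_sqrt_le _ (fun p => hμ.1 p.2) fun p => by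
          linarith [mul_finKL_condDist_nonneg μ g hμ p.1 p.2]
    _ = √(2 * log 2 * (D * r - pushH μ g) / D) := by
        rw [hmass, hchain, sqrt_div' _ (Nat.cast_nonneg D), ← mul_assoc, inv_mul_eq_div,
          sqrt_div_self', one_div_mul_eq_div]

section Blocks

variable {m D : ℕ}

def blockIndex (hdvd : D ∣ m) (s : Fin D) (j : Fin (m / D)) : Fin m :=
  ⟨(s : ℕ) * (m / D) + (j : ℕ), by nlinarith [s.isLt, j.isLt, Nat.mul_div_cancel' hdvd]⟩

def toBlocks {α : Type*} (hdvd : D ∣ m) (v : Fin m → α) : Fin D → Fin (m / D) → α :=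
  fun s j => v (blockIndex hdvd s j)

lemma blockIndex_surjective (hdvd : D ∣ m) :
    Function.Surjective fun p : Fin D × Fin (m / D) => blockIndex hdvd p.1 p.2 := by
  have : (fun p : Fin D × Fin (m / D) => blockIndex hdvd p.1 p.2) =
      finCongr (Nat.mul_div_cancel' hdvd) ∘ finProdFinEquiv := by
    funext p
    ext
    simp [blockIndex, finProdFinEquiv]
    ring
  rw [this]
  exact (finCongr _).surjective.comp finProdFinEquiv.surjective

lemma toBlocks_injective {α : Type*} (hdvd : D ∣ m) :
    Function.Injective (toBlocks (α := α) hdvd) := fun _ _ hvw =>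
  (blockIndex_surjective hdvd).injective_comp_right <|
    funext fun p => congrFun (congrFun hvw p.1) p.2

end Blocks

lemma pushH_comp_of_injective {Ω β γ : Type*} [Fintype Ω] [Fintype β] [Fintype γ] (μ : Ω → ℝ)
    {e : β → γ} (he : Function.Injective e) (f : Ω → β) : pushH μ (e ∘ f) = pushH μ f := by
  simp only [pushH_eq_sum, Function.comp, he.eq_iff]

/-- Deterministic entropy condensers yield very strong extractors: if `h` has output
entropy at least `(1−ε)m` on every `μ ∈ F`, and `(ln 2)/2·ε ≤ D/m`, then splitting
`h(x)` into `D` blocks of `m/D` bits gives a very strong `δ`-extractor for `F` with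
`δ = sqrt((ln 2)/2 · ε · m/D)` (i.e. the extractor error is at most `2δ`). -/
theorem condenser_to_very_strong_extractor {n m D : ℕ}
    (hdvd : D ∣ m) (ε : ℝ)
    (F : Set ((Fin n → Bool) → ℝ)) (hF : ∀ μ ∈ F, IsDist μ)
    (h : (Fin n → Bool) → (Fin m → Bool))
    (hent : ∀ μ ∈ F, (1 - ε) * m ≤ pushH μ h) :
    ∀ μ ∈ F,
      vsErr μ (fun x s => fun j : Fin (m / D) => h x ⟨(s : ℕ) * (m / D) + (j : ℕ), by
          have hj := j.isLt
          have h1 : (s : ℕ) * (m / D) + (j : ℕ) < ((s : ℕ) + 1) * (m / D) := by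
            rw [add_mul, one_mul]; exact Nat.add_lt_add_left hj _
          have h2 : ((s : ℕ) + 1) * (m / D) ≤ D * (m / D) :=
            Nat.mul_le_mul_right _ s.isLt
          exact h1.trans_le (le_of_le_of_eq h2 (Nat.mul_div_cancel' hdvd))⟩)
        ≤ 2 * Real.sqrt (Real.log 2 / 2 * ε * m / D) := by
  intro μ hμF
  change vsErr μ (toBlocks hdvd ∘ h) ≤ _
  have hm : (D : ℝ) * (m / D : ℕ) = m := by exact_mod_cast Nat.mul_div_cancel' hdvd
  calc vsErr μ (toBlocks hdvd ∘ h)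
      ≤ √(2 * log 2 * (D * (m / D : ℕ) - pushH μ h) / D) := by
        rw [← pushH_comp_of_injective μ (toBlocks_injective hdvd) h]
        exact vsErr_le_sqrt (hF μ hμF) _
    _ ≤ √(2 * log 2 * (ε * m) / D) := by
        gcongr
        linarith [hent μ hμF]
    _ = 2 * √(log 2 / 2 * ε * m / D) := by
        rw [show 2 * log 2 * (ε * m) / D = 2 ^ 2 * (log 2 / 2 * ε * m / D) by ring,
          sqrt_mul (by norm_num), sqrt_sq zero_le_two]
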